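/- Let n be a nonnegative integer and let a, b be odd positive integers. Then I_0({a,b}^n) = (-1)^n ({a+b}^n) in 𝓘, where {a,b}^n is the index (a,b,a,b,…,a,b) of length 2n and {a+b}^n is the index of n copies of a+b. -/

import Mathlib

/-- Indices: finite sequences of positive integers (modeled as lists of naturals). -/
abbrev Idx := List ℕ

/-- The ℚ-vector space 𝓘 on the set of indices. -/
abbrev Ical := Idx →₀ ℚ

/-- Auxiliary harmonic product on reversed lists (cons = append at the end). -/
noncomputable def harmAux : Idx → Idx → Ical
  | [], l => Finsupp.single l 1
  | a :: k, [] => Finsupp.single (a :: k) 1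
  | a :: k, b :: l =>
      Finsupp.mapDomain (a :: ·) (harmAux k (b :: l)) +
      Finsupp.mapDomain (b :: ·) (harmAux (a :: k) l) +
      Finsupp.mapDomain ((a + b) :: ·) (harmAux k l)
termination_by k l => k.length + l.length

/-- The harmonic (stuffle) product of two indices. -/
noncomputable def harm (k l : Idx) : Ical :=
  Finsupp.mapDomain List.reverse (harmAux k.reverse l.reverse)

/-- Bilinear extension of the harmonic product to 𝓘. -/
noncomputable def harmF (x y : Ical) : Ical :=
  x.sum fun k c => y.sum fun l d => (c * d) • harm k l

/-- The map σₙ on indices. -/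
noncomputable def sigma : ℕ → Idx → Ical
  | n, [] => if n = 0 then Finsupp.single [] 1 else 0
  | n, k :: ks =>
      ∑ a ∈ Finset.range (n + 1),
        ((k + a - 1).choose a : ℚ) •
          Finsupp.mapDomain (fun t => (k + a) :: t) (sigma (n - a) ks)

/-- Linear extension of σₙ to 𝓘. -/
noncomputable def sigmaL (n : ℕ) (x : Ical) : Ical :=
  x.sum fun k c => c • sigma n k

/-- The map ₘIₙ on indices. -/
noncomputable def mI (m n : ℕ) (ks : Idx) : Ical :=
  ∑ i ∈ Finset.range (ks.length + 1),
    ((-1 : ℚ)) ^ ((ks.drop i).sum) •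
      harmF (sigma m (ks.take i)) (sigma n ((ks.drop i).reverse))

/-- The index shuffle product ⧢̃ of two indices. -/
noncomputable def sh : Idx → Idx → Ical
  | [], l => Finsupp.single l 1
  | a :: k, [] => Finsupp.single (a :: k) 1
  | a :: k, b :: l =>
      Finsupp.mapDomain (a :: ·) (sh k (b :: l)) +
      Finsupp.mapDomain (b :: ·) (sh (a :: k) l)
termination_by k l => k.length + l.length

/-- The multiple zeta value of an index. -/
noncomputable def mzv (ks : List ℕ) : ℝ :=
  ∑' f : {f : Fin ks.length → ℕ // StrictMono f ∧ ∀ i, 0 < f i},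
    ∏ i, (1 / (f.1 i : ℝ) ^ ks.get i)

/-!
With `σ₀ = id`, `I₀(w)` is, up to reversal, the alternating sum
`Σᵢ ± (wᵢ, …, w₁) * (wᵢ₊₁, …, w_r)` of harmonic products over the splittings of `w`; for odd
letters the sign `(-1)^(wᵢ₊₁ + ⋯ + w_r)` only depends on the parity of `r - i`. Expanding each
product by its first letters, the terms beginning with an unmerged letter telescope away, and
only the terms starting with a merged pair `wᵢ + wᵢ₊₁` survive. When `w` alternates between
`a` and `b`, every such pair is `a + b` and deleting it from `w` leaves `{a,b}ⁿ⁻¹` split at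
every position exactly once, so the alternating sum for `{a,b}ⁿ` is `-(a + b)` prepended to the
one for `{a,b}ⁿ⁻¹`.
-/

open Finsupp

lemma harmAux_nil_left (l : Idx) : harmAux [] l = single l 1 := by
  rw [harmAux]

lemma harmAux_nil_right (k : Idx) : harmAux k [] = single k 1 := by
  cases k <;> rw [harmAux]

lemma harmAux_cons_cons (a b : ℕ) (k l : Idx) :
    harmAux (a :: k) (b :: l) =
      mapDomain (a :: ·) (harmAux k (b :: l)) + mapDomain (b :: ·) (harmAux (a :: k) l) +
        mapDomain ((a + b) :: ·) (harmAux k l) := by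
  rw [harmAux]

lemma sigma_zero (k : Idx) : sigma 0 k = single k 1 := by
  induction k with
  | nil => simp [sigma]
  | cons x ks ih => simp [sigma, ih, mapDomain_single]

lemma harmF_single_one (k l : Idx) : harmF (single k 1) (single l 1) = harm k l := by
  simp [harmF, sum_single_index]

noncomputable def altSplitSum : Idx → Idx → Ical
  | u, [] => harmAux u []
  | u, x :: v => harmAux u (x :: v) - altSplitSum (x :: u) v

/-- The part of `altSplitSum (x :: u) v` made of the terms whose first letter is a merged pair. -/
noncomputable def contractedSplitSum : ℕ → Idx → Idx → Ical
  | _, _, [] => 0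
  | x, u, y :: v => mapDomain ((x + y) :: ·) (harmAux u v) - contractedSplitSum y (x :: u) v

lemma altSplitSum_eq_sum (u v : Idx) :
    altSplitSum u v = ∑ i ∈ Finset.range (v.length + 1),
      (-1 : ℚ) ^ i • harmAux ((v.take i).reverse ++ u) (v.drop i) := by
  induction v generalizing u with
  | nil => simp [altSplitSum]
  | cons x v ih =>
    rw [altSplitSum, ih, List.length_cons, Finset.sum_range_succ' _ (v.length + 1)]
    simp [pow_succ, Finset.sum_neg_distrib, sub_eq_add_neg, add_comm]

lemma altSplitSum_cons_left (x : ℕ) (u v : Idx) :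
    altSplitSum (x :: u) v = mapDomain (x :: ·) (harmAux u v) + contractedSplitSum x u v := by
  induction v generalizing x u with
  | nil => simp [altSplitSum, contractedSplitSum, harmAux_nil_right, mapDomain_single]
  | cons y v ih =>
    rw [altSplitSum, contractedSplitSum, ih, harmAux_cons_cons]
    abel

lemma altSplitSum_nil_cons (x : ℕ) (v : Idx) :
    altSplitSum [] (x :: v) = -contractedSplitSum x [] v := by
  rw [altSplitSum, altSplitSum_cons_left, harmAux_nil_left, harmAux_nil_left, mapDomain_single]
  abel

/-- Adjacent letters summing to `c` forces the word to alternate between two letters, so removing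
any merged pair leaves the same word shortened by two. -/
lemma contractedSplitSum_of_isChain {c x y : ℕ} {v : Idx}
    (hv : (x :: y :: v).IsChain (fun p q => p + q = c)) (u : Idx) :
    contractedSplitSum x u (y :: v) = mapDomain (c :: ·) (altSplitSum u v) := by
  induction v generalizing x y u with
  | nil => simp [contractedSplitSum, altSplitSum, List.isChain_pair.mp hv]
  | cons z v ih =>
    obtain ⟨hxy, hyzv⟩ := List.isChain_cons_cons.mp hv
    obtain rfl : z = x := by have := (List.isChain_cons_cons.mp hyzv).1; omega
    rw [contractedSplitSum, ih hyzv, altSplitSum, mapDomain_sub, hxy]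

lemma isChain_cons_flatten_replicate (a b n : ℕ) :
    (b :: (List.replicate n [a, b]).flatten).IsChain (fun p q => p + q = a + b) := by
  induction n with
  | zero => exact List.isChain_singleton b
  | succ n ih =>
    simpa [List.replicate_succ, add_comm b a] using ih

lemma altSplitSum_flatten_replicate (a b n : ℕ) :
    altSplitSum [] (List.replicate n [a, b]).flatten
      = (-1 : ℚ) ^ n • single (List.replicate n (a + b)) 1 := by
  induction n with
  | zero => simp [altSplitSum, harmAux_nil_left]
  | succ n ih =>
    have hchain : (a :: b :: (List.replicate n [a, b]).flatten).IsChain (· + · = a + b) :=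
      List.isChain_cons_cons.mpr ⟨rfl, isChain_cons_flatten_replicate a b n⟩
    simp only [List.replicate_succ, List.flatten_cons, List.cons_append, List.nil_append]
    rw [altSplitSum_nil_cons, contractedSplitSum_of_isChain hchain, ih, mapDomain_smul,
      mapDomain_single, pow_succ, mul_comm, mul_smul, neg_one_smul]

lemma neg_one_pow_sum_of_odd {l : List ℕ} (hl : ∀ k ∈ l, Odd k) :
    (-1 : ℚ) ^ l.sum = (-1) ^ l.length := by
  induction l with
  | nil => rfl
  | cons k l ih =>
    simp only [List.forall_mem_cons] at hl
    rw [List.sum_cons, List.length_cons, pow_add, pow_succ', ih hl.2, hl.1.neg_one_pow]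

lemma mI_zero_zero_of_odd {w : Idx} (hw : ∀ k ∈ w, Odd k) :
    mI 0 0 w = (-1 : ℚ) ^ w.length • mapDomain List.reverse (altSplitSum [] w) := by
  rw [altSplitSum_eq_sum, mapDomain_finsetSum, Finset.smul_sum, mI]
  refine Finset.sum_congr rfl fun i hi => ?_
  have hi : i ≤ w.length := Nat.lt_succ_iff.mp (Finset.mem_range.mp hi)
  have hsign : (-1 : ℚ) ^ (w.drop i).sum = (-1) ^ w.length * (-1) ^ i := by
    obtain ⟨m, hm⟩ := Nat.exists_eq_add_of_le hi
    rw [neg_one_pow_sum_of_odd fun k hk => hw k (List.mem_of_mem_drop hk), List.length_drop, hm,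
      Nat.add_sub_cancel_left, pow_add, mul_right_comm, ← mul_pow, neg_one_mul, neg_neg, one_pow,
      one_mul]
  rw [sigma_zero, sigma_zero, harmF_single_one, harm, List.reverse_reverse, List.append_nil,
    mapDomain_smul, smul_smul, hsign]

theorem I0_alternating_general (n a b : ℕ) (ha : Odd a) (hb : Odd b) :
    mI 0 0 ((List.replicate n [a, b]).flatten)
      = ((-1 : ℚ)) ^ n • Finsupp.single (List.replicate n (a + b)) (1 : ℚ) := by
  have hodd : ∀ k ∈ (List.replicate n [a, b]).flatten, Odd k := by
    simp only [List.mem_flatten, List.mem_replicate]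
    rintro k ⟨_, ⟨_, rfl⟩, hk⟩
    rcases List.mem_pair.mp hk with rfl | rfl <;> assumption
  rw [mI_zero_zero_of_odd hodd, altSplitSum_flatten_replicate, mapDomain_smul, mapDomain_single,
    List.reverse_replicate, smul_smul, List.length_flatten]
  simp

/-- For odd positive a, b: I₀({a,b}ⁿ) = (-1)ⁿ ({a+b}ⁿ). -/
theorem I0_alternating (n a b : ℕ) (ha : Odd a) (hb : Odd b)
    (ha' : 0 < a) (hb' : 0 < b) :
    mI 0 0 ((List.replicate n [a, b]).flatten)
      = ((-1 : ℚ)) ^ n • Finsupp.single (List.replicate n (a + b)) (1 : ℚ) :=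
  I0_alternating_general n a b ha hb
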